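/- arXiv:1012.0406 — 3 statements merged into one kernel-verified Lean document; each statement's English description precedes it below -/
import Mathlib

section
/- For any partition ν with largest part ν_1 ≤ n, the elementary symmetric polynomial e_ν(x_1,...,x_n) can be written as Σ_{μ ≤ ν'} a_{νμ} m_μ(x_1,...,x_n) where the a_{νμ} are nonnegative integers, the sum is over partitions μ dominated by the conjugate ν', and a_{νν'} = 1. -/
/-!
Expanding each `e_{ν_j}` into squarefree monomials `x^{S_j}` with `#S_j = ν_j`, the coefficient
of `x^d` in `e_ν` is the number of families `(S_j)` whose incidence vector `i ↦ #{j | i ∈ S_j}`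
is `d`. Since `e_ν` is symmetric, it is the sum of these counts times `m_μ` over the sorted
exponents `μ`. The first `c` entries of an incidence vector sum to
`∑_j #(S_j ∩ [0, c)) ≤ ∑_j min(ν_j, c)`, which is the `c`-th partial sum of `ν'`; hence `μ ≤ ν'`.
When the incidence vector is `ν'` itself, all these inequalities are equalities, and the one for
`S_j` at `c = ν_j` forces `S_j = [0, ν_j)`; so `x^{ν'}` arises from exactly one family.
-/

open Finset MvPolynomial
open scoped Classical

noncomputable section

/-- The conjugate (transpose) partition of `ν` (encoded as an antitone function
`Fin l → ℕ`): `ν'_j = #{i : ν_i > j}` (`0`-based `j`). -/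
def conjP {l : ℕ} (ν : Fin l → ℕ) (j : ℕ) : ℕ :=
  (Finset.univ.filter fun i : Fin l => j < ν i).card

/-- The monomial symmetric polynomial `m_μ(x_1, …, x_n)` over `ℤ`: the sum of all distinct
monomials obtained by permuting the exponent vector `μ`. -/
def msymP (n : ℕ) (μ : Fin n → ℕ) : MvPolynomial (Fin n) ℤ :=
  ∑ f ∈ (Finset.univ : Finset (Equiv.Perm (Fin n))).image (fun σ : Equiv.Perm (Fin n) => μ ∘ ⇑σ),
    ∏ i : Fin n, X i ^ f i

section RowChoices

variable {σ ι : Type*} [Fintype ι]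

def incidence (S : ι → Finset σ) : σ →₀ ℕ :=
  ∑ j, ∑ i ∈ S j, Finsupp.single i 1

theorem incidence_apply [DecidableEq σ] (S : ι → Finset σ) (i : σ) :
    incidence S i = #{j | i ∈ S j} := by
  simp [incidence, Finsupp.finsetSum_apply, Finsupp.single_apply]

theorem sum_incidence_apply [DecidableEq σ] (S : ι → Finset σ) (T : Finset σ) :
    ∑ i ∈ T, incidence S i = ∑ j, #(S j ∩ T) := by
  simp_rw [incidence_apply, card_filter]
  rw [sum_comm]
  refine sum_congr rfl fun j _ => ?_
  rw [← card_filter, filter_mem_eq_inter, inter_comm]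

theorem sum_incidence_apply_le [DecidableEq σ] {ν : ι → ℕ} {S : ι → Finset σ}
    (hS : ∀ j, #(S j) = ν j) (T : Finset σ) : ∑ i ∈ T, incidence S i ≤ ∑ j, min (ν j) #T := by
  rw [sum_incidence_apply]
  exact sum_le_sum fun j _ => le_min (hS j ▸ card_le_card inter_subset_left)
    (card_le_card inter_subset_right)

variable [Fintype σ]

def rowChoices (ν : ι → ℕ) (d : σ →₀ ℕ) : Finset (ι → Finset σ) :=
  {S ∈ Fintype.piFinset fun j => powersetCard (ν j) univ | incidence S = d}

theorem prod_esymm_eq_sum_monomial (R : Type*) [CommSemiring R] (ν : ι → ℕ) :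
    ∏ j, esymm σ R (ν j)
      = ∑ S ∈ Fintype.piFinset (fun j => powersetCard (ν j) univ), monomial (incidence S) 1 := by
  simp_rw [esymm_eq_sum_monomial, prod_univ_sum, incidence, monomial_sum_one]

theorem coeff_prod_esymm (R : Type*) [CommSemiring R] (ν : ι → ℕ) (d : σ →₀ ℕ) :
    coeff d (∏ j, esymm σ R (ν j)) = #(rowChoices ν d) := by
  simp [prod_esymm_eq_sum_monomial, coeff_sum, coeff_monomial, rowChoices, eq_comm]

theorem exists_incidence_eq_of_coeff_prod_esymm_ne_zero {R : Type*} [CommSemiring R]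
    {ν : ι → ℕ} {d : σ →₀ ℕ} (h : coeff d (∏ j, esymm σ R (ν j)) ≠ 0) :
    ∃ S : ι → Finset σ, (∀ j, #(S j) = ν j) ∧ incidence S = d := by
  rw [coeff_prod_esymm] at h
  obtain ⟨S, hS⟩ := card_ne_zero.mp fun h0 => h (by rw [h0, Nat.cast_zero])
  simp only [rowChoices, mem_filter, Fintype.mem_piFinset, mem_powersetCard_univ] at hS
  exact ⟨S, hS⟩

theorem sum_incidence {ν : ι → ℕ} {S : ι → Finset σ} (hS : ∀ j, #(S j) = ν j) :
    ∑ i, incidence S i = ∑ j, ν j := by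
  simp [sum_incidence_apply, hS]

end RowChoices

section Conjugate

def initialSegment (n c : ℕ) : Finset (Fin n) := univ.filter fun i => (i : ℕ) < c

theorem card_initialSegment {n c : ℕ} (hc : c ≤ n) : #(initialSegment n c) = c := by
  rw [initialSegment, Fin.card_filter_val_lt, min_eq_right hc]

theorem initialSegment_inter (n a b : ℕ) :
    initialSegment n a ∩ initialSegment n b = initialSegment n (min a b) := by
  ext i
  simp [initialSegment]

theorem filter_le_eq_initialSegment {n : ℕ} (k : Fin n) :
    (univ : Finset (Fin n)).filter (· ≤ k) = initialSegment n (k + 1) := by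
  ext i
  simp only [initialSegment, mem_filter, mem_univ, true_and, Fin.le_def]
  omega

variable {n l : ℕ} {ν : Fin l → ℕ}

theorem conjP_eq_incidence (ν : Fin l → ℕ) (i : Fin n) :
    conjP ν i = incidence (fun j => initialSegment n (ν j)) i := by
  simp [conjP, incidence_apply, initialSegment]

theorem sum_initialSegment_conjP (hν : ∀ j, ν j ≤ n) (c : ℕ) :
    ∑ i ∈ initialSegment n c, conjP ν i = ∑ j, min (ν j) c := by
  simp_rw [conjP_eq_incidence, sum_incidence_apply, initialSegment_inter]
  exact sum_congr rfl fun j _ => card_initialSegment ((min_le_left _ _).trans (hν j))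

theorem sum_initialSegment_incidence_le_conjP (hν : ∀ j, ν j ≤ n) {S : Fin l → Finset (Fin n)}
    (hS : ∀ j, #(S j) = ν j) {c : ℕ} (hc : c ≤ n) :
    ∑ i ∈ initialSegment n c, incidence S i ≤ ∑ i ∈ initialSegment n c, conjP ν i := by
  have h := sum_incidence_apply_le hS (initialSegment n c)
  rwa [card_initialSegment hc, ← sum_initialSegment_conjP hν] at h

theorem eq_initialSegment_of_incidence_eq (hν : ∀ j, ν j ≤ n) {S : Fin l → Finset (Fin n)}
    (hS : ∀ j, #(S j) = ν j) (h : incidence S = incidence fun j => initialSegment n (ν j)) :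
    S = fun j => initialSegment n (ν j) := by
  funext j
  set T := initialSegment n (ν j)
  have hT : #T = ν j := card_initialSegment (hν j)
  have hsum : ∑ j', #(S j' ∩ T) = ∑ j', min (ν j') (ν j) := by
    rw [← sum_incidence_apply, h, ← sum_initialSegment_conjP hν]
    exact sum_congr rfl fun i _ => (conjP_eq_incidence ν i).symm
  have hle : ∀ j' ∈ univ, #(S j' ∩ T) ≤ min (ν j') (ν j) := fun j' _ =>
    le_min (hS j' ▸ card_le_card inter_subset_left) (hT ▸ card_le_card inter_subset_right)
  have hj : #(S j ∩ T) = #(S j) := by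
    rw [(sum_eq_sum_iff_of_le hle).mp hsum j (mem_univ j), min_self, hS]
  have hsub : S j ⊆ T := (eq_of_subset_of_card_le inter_subset_left hj.ge) ▸ inter_subset_right
  exact eq_of_subset_of_card_le hsub (by rw [hT, hS])

theorem card_rowChoices_incidence_initialSegment (hν : ∀ j, ν j ≤ n) :
    #(rowChoices ν (incidence fun j => initialSegment n (ν j))) = 1 := by
  refine card_eq_one.mpr ⟨fun j => initialSegment n (ν j), ?_⟩
  ext S
  simp only [rowChoices, mem_filter, Fintype.mem_piFinset, mem_powersetCard_univ, mem_singleton]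
  constructor
  · rintro ⟨hS, h⟩
    exact eq_initialSegment_of_incidence_eq hν hS h
  · rintro rfl
    exact ⟨fun j => card_initialSegment (hν j), rfl⟩

theorem sum_eq_and_dominated_of_coeff_prod_esymm_ne_zero (hν : ∀ j, ν j ≤ n) {μ : Fin n → ℕ}
    (h : coeff (Finsupp.equivFunOnFinite.symm μ) (∏ j, esymm (Fin n) ℤ (ν j)) ≠ 0) :
    ∑ i, μ i = ∑ j, ν j ∧ ∀ k : Fin n, ∑ i ∈ univ.filter (· ≤ k), μ i
      ≤ ∑ i ∈ univ.filter (· ≤ k), conjP ν (i : ℕ) := by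
  obtain ⟨S, hS, hSμ⟩ := exists_incidence_eq_of_coeff_prod_esymm_ne_zero h
  obtain rfl : incidence S = μ := by rw [hSμ]; rfl
  refine ⟨sum_incidence hS, fun k => ?_⟩
  simp only [filter_le_eq_initialSegment]
  exact sum_initialSegment_incidence_le_conjP hν hS k.isLt

end Conjugate

section MonomialSymmetric

variable {n : ℕ}

theorem exists_antitone_comp_perm {α : Type*} [LinearOrder α] (g : Fin n → α) :
    ∃ τ : Equiv.Perm (Fin n), Antitone (g ∘ τ) :=
  ⟨Tuple.sort (OrderDual.toDual ∘ g), Tuple.monotone_sort (OrderDual.toDual ∘ g)⟩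

theorem prod_X_pow_eq_monomial_equivFunOnFinite {R : Type*} [CommSemiring R] (f : Fin n → ℕ) :
    ∏ i, (X i : MvPolynomial (Fin n) R) ^ f i
      = monomial (Finsupp.equivFunOnFinite.symm f) 1 := by
  rw [monomial_eq, C_1, one_mul, Finsupp.prod_fintype _ _ fun _ => pow_zero _]
  rfl

theorem coeff_msymP (μ : Fin n → ℕ) (d : Fin n →₀ ℕ) :
    coeff d (msymP n μ) = if ∃ τ : Equiv.Perm (Fin n), μ ∘ τ = d then 1 else 0 := by
  simp only [msymP, prod_X_pow_eq_monomial_equivFunOnFinite, coeff_sum, coeff_monomial,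
    Equiv.symm_apply_eq]
  rw [sum_ite_eq']
  simp only [mem_image, mem_univ, true_and]
  rfl

theorem MvPolynomial.IsSymmetric.coeff_comp_perm {R : Type*} [CommSemiring R]
    {p : MvPolynomial (Fin n) R} (hp : p.IsSymmetric) (g : Fin n → ℕ) (τ : Equiv.Perm (Fin n)) :
    coeff (Finsupp.equivFunOnFinite.symm (g ∘ τ)) p
      = coeff (Finsupp.equivFunOnFinite.symm g) p := by
  rw [← coeff_rename_mapDomain τ τ.injective, hp τ]
  congr 1
  ext i
  obtain ⟨j, rfl⟩ := τ.surjective i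
  simp [Finsupp.mapDomain_apply τ.injective]

theorem MvPolynomial.IsSymmetric.eq_sum_smul_msymP {p : MvPolynomial (Fin n) ℤ}
    (hp : p.IsSymmetric) (S : Finset (Fin n → ℕ)) (hS : ∀ μ ∈ S, Antitone μ)
    (hsupp : ∀ μ, Antitone μ → coeff (Finsupp.equivFunOnFinite.symm μ) p ≠ 0 → μ ∈ S) :
    p = ∑ μ ∈ S, coeff (Finsupp.equivFunOnFinite.symm μ) p • msymP n μ := by
  ext d
  obtain ⟨τ₀, hτ₀⟩ := exists_antitone_comp_perm ⇑d
  have horbit : ∀ μ ∈ S, (∃ τ : Equiv.Perm (Fin n), μ ∘ τ = d) ↔ μ = d ∘ τ₀ := by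
    refine fun μ hμ => ⟨?_, fun h => ⟨τ₀⁻¹, by simp [h, Function.comp_assoc]⟩⟩
    rintro ⟨τ, hτ⟩
    rw [← hτ] at hτ₀ ⊢
    have := Tuple.unique_antitone (σ := 1) (τ := τ * τ₀) (hS μ hμ) hτ₀
    simpa [Function.comp_assoc] using this
  have hcoeff : coeff (Finsupp.equivFunOnFinite.symm (d ∘ τ₀)) p = coeff d p := by
    rw [hp.coeff_comp_perm, Finsupp.equivFunOnFinite_symm_coe]
  simp only [coeff_sum, coeff_smul, coeff_msymP, smul_eq_mul, mul_ite, mul_one, mul_zero]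
  rw [sum_congr rfl fun μ hμ => if_congr (horbit μ hμ) rfl rfl, sum_ite_eq']
  split_ifs with h
  · exact hcoeff.symm
  · rw [← hcoeff]
    exact not_not.mp fun h0 => h (hsupp _ hτ₀ h0)

end MonomialSymmetric

theorem stmt1_general (n l : ℕ)
    (ν : Fin l → ℕ) (hν1 : ∀ j, ν j ≤ n) :
    ∃ a : (Fin n → ℕ) → ℕ,
      (∏ j : Fin l, esymm (Fin n) ℤ (ν j))
        = ∑ μ ∈ (Finset.univ : Finset (Fin n → Fin ((∑ j : Fin l, ν j) + 1))).filter
            (fun μ => Antitone (fun i => (μ i : ℕ)) ∧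
              (∑ i : Fin n, (μ i : ℕ)) = ∑ j : Fin l, ν j ∧
              ∀ k : Fin n, ∑ i ∈ Finset.univ.filter (· ≤ k), (μ i : ℕ)
                ≤ ∑ i ∈ Finset.univ.filter (· ≤ k), conjP ν (i : ℕ)),
            (a (fun i => (μ i : ℕ)) : ℤ) • msymP n (fun i => (μ i : ℕ))
      ∧ a (fun i : Fin n => conjP ν (i : ℕ)) = 1 := by
  set N := ∑ j, ν j
  set F := (univ : Finset (Fin n → Fin (N + 1))).filter
    (fun μ => Antitone (fun i => (μ i : ℕ)) ∧ (∑ i : Fin n, (μ i : ℕ)) = N ∧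
      ∀ k : Fin n, ∑ i ∈ univ.filter (· ≤ k), (μ i : ℕ) ≤ ∑ i ∈ univ.filter (· ≤ k), conjP ν i)
  let toNat (μ : Fin n → Fin (N + 1)) (i : Fin n) : ℕ := μ i
  have hsymm : (∏ j, esymm (Fin n) ℤ (ν j)).IsSymmetric :=
    prod_mem (S := symmetricSubalgebra (Fin n) ℤ) fun j _ => esymm_isSymmetric (Fin n) ℤ (ν j)
  have hanti : ∀ μ ∈ F.image toNat, Antitone μ := by
    simp only [mem_image]
    rintro _ ⟨μ, hμ, rfl⟩
    exact (mem_filter.mp hμ).2.1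
  have hsupp : ∀ μ, Antitone μ →
      coeff (Finsupp.equivFunOnFinite.symm μ) (∏ j, esymm (Fin n) ℤ (ν j)) ≠ 0 →
        μ ∈ F.image toNat := by
    intro μ hμ hcoeff
    obtain ⟨htotal, hdom⟩ := sum_eq_and_dominated_of_coeff_prod_esymm_ne_zero hν1 hcoeff
    have hbound (i : Fin n) : μ i < N + 1 :=
      Nat.lt_succ_of_le ((single_le_sum (fun _ _ => Nat.zero_le _) (mem_univ i)).trans htotal.le)
    exact mem_image.mpr
      ⟨fun i => ⟨μ i, hbound i⟩, mem_filter.mpr ⟨mem_univ _, hμ, htotal, hdom⟩, rfl⟩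
  refine ⟨fun μ => #(rowChoices ν (Finsupp.equivFunOnFinite.symm μ)), ?_, ?_⟩
  · have key := hsymm.eq_sum_smul_msymP _ hanti hsupp
    rw [sum_image fun μ _ μ' _ h => funext fun i => Fin.ext (congrFun h i)] at key
    simpa only [coeff_prod_esymm] using key
  · convert card_rowChoices_incidence_initialSegment hν1
    ext i
    exact conjP_eq_incidence ν i

/-- For any partition `ν = (ν_1 ≥ … ≥ ν_ℓ)` (positive parts) with
`ν_1 ≤ n`, there are nonnegative integers `a_{νμ}` such that
`e_ν(x_1,…,x_n) = ∑_{μ ≤ ν'} a_{νμ} m_μ(x_1,…,x_n)`, the sum being over partitions `μ`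
of `|ν|` (with at most `n` parts, encoded as antitone functions `Fin n → Fin (|ν|+1)`)
dominated by the conjugate `ν'`, and `a_{νν'} = 1`. -/
theorem stmt1 (n l : ℕ) (hn : 1 ≤ n)
    (ν : Fin l → ℕ) (hν : Antitone ν) (hpos : ∀ j, 1 ≤ ν j) (hν1 : ∀ j, ν j ≤ n) :
    ∃ a : (Fin n → ℕ) → ℕ,
      (∏ j : Fin l, esymm (Fin n) ℤ (ν j))
        = ∑ μ ∈ (Finset.univ : Finset (Fin n → Fin ((∑ j : Fin l, ν j) + 1))).filter
            (fun μ => Antitone (fun i => (μ i : ℕ)) ∧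
              (∑ i : Fin n, (μ i : ℕ)) = ∑ j : Fin l, ν j ∧
              ∀ k : Fin n, ∑ i ∈ Finset.univ.filter (· ≤ k), (μ i : ℕ)
                ≤ ∑ i ∈ Finset.univ.filter (· ≤ k), conjP ν (i : ℕ)),
            (a (fun i => (μ i : ℕ)) : ℤ) • msymP n (fun i => (μ i : ℕ))
      ∧ a (fun i : Fin n => conjP ν (i : ℕ)) = 1 :=
  stmt1_general n l ν hν1
end
end

section
/- Fix integers n ≥ 1, q ≥ 2, 1 ≤ k ≤ q-2, 0 ≤ m ≤ n, and a ≥ 0. Let ρ_i = n - i. The number of pairs (λ, (i_1 < ... < i_m)) with λ = (λ_1 ≥ ... ≥ λ_n) ∈ ℤ^n dominant and 1 ≤ i_1 < ... < i_m ≤ n satisfying: (q-1)Σρ_i + (q-1)Σλ_i - nk - m = a; (q-1)ρ_i + (q-1)λ_i - k ≥ 0 for i ∉ {i_1,...,i_m} and ≥ 1 for i ∈ {i_1,...,i_m}; (q-1)ρ_i + qλ_i ≤ λ_{i-1} + k for 2 ≤ i ≤ n with i ∉ {i_1,...,i_m} and (q-1)ρ_i + qλ_i - 1 ≤ λ_{i-1}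 + k for i ∈ {i_1,...,i_m}, equals the coefficient of t^a in t^{-n+(q-k)(q^n-1)/(q-1)} · e_m(t^{-1}, t^{-q}, ..., t^{-q^{n-1}}) / ∏_{i=1}^n (1 - t^{q^i - 1}). -/
open Finset PowerSeries

/-- The number of pairs `(λ, S)` in Statement 2: `λ = (λ_1 ≥ … ≥ λ_n) ∈ ℤ^n` dominant
(indexed here by `Fin n`, `0`-based, with `ρ_i = n - 1 - i`), and
`S = {i_1 < ⋯ < i_m} ⊆ {1, …, n}` a subset of cardinality `m`, subject to:
* `(q-1) ∑ ρ_i + (q-1) ∑ λ_i - nk - m = a`;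
* `(q-1)ρ_i + (q-1)λ_i - k ≥ [i ∈ S]` for all `i`;
* `(q-1)ρ_i + qλ_i - [i ∈ S] ≤ λ_{i-1} + k` for all `i ≥ 2` (0-based: `i ≥ 1`). -/
noncomputable def stmt2Count (n q k m a : ℕ) : ℕ :=
  Nat.card {x : (Fin n → ℤ) × Finset (Fin n) //
    Antitone x.1 ∧ x.2.card = m ∧
    ((q : ℤ) - 1) * (∑ i : Fin n, ((n : ℤ) - 1 - (i : ℕ)))
        + ((q : ℤ) - 1) * (∑ i : Fin n, x.1 i) - n * k - m = a ∧
    (∀ i : Fin n,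
      (if i ∈ x.2 then (1 : ℤ) else 0) ≤
        ((q : ℤ) - 1) * ((n : ℤ) - 1 - (i : ℕ)) + ((q : ℤ) - 1) * x.1 i - k) ∧
    (∀ i : Fin n, 0 < (i : ℕ) →
      ((q : ℤ) - 1) * ((n : ℤ) - 1 - (i : ℕ)) + q * x.1 i - (if i ∈ x.2 then (1 : ℤ) else 0)
        ≤ x.1 ⟨(i : ℕ) - 1, by omega⟩ + k)}

/-!
Write `μ = λ + ρ`. For `2 ≤ i ≤ n` the second family of inequalities says exactly that
`c_{i-1} := μ_{i-1} - q μ_i + k - 1 + [i ∈ S]` is nonnegative, and the first family at `i = n`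
forces `c_n := μ_n - 1 ≥ 0`. Conversely, once all `c_j ≥ 0`, the bound `(q - 1) μ_i ≥ k + 1`
propagates downwards from `i = n` (this is where `k ≤ q - 2` enters) and gives the first family
and dominance. The map `μ ↦ c` is a triangular bijection of `ℤ^n`, and by Abel summation the
degree condition reads `E(S) + ∑_j c_j (q^j - 1) = a` with
`E(S) = (q - k)(q^n - 1)/(q - 1) - n - ∑_{i ∈ S} q^{i-1}`. So for fixed `S` we count nonnegative
solutions of `∑_j c_j (q^j - 1) = a - E(S)`, whose generating series is
`t^{E(S)} / ∏_j (1 - t^{q^j - 1})`; summing over `S` produces the `e_m` factor.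
-/

lemma mk_dvd_mul_one_sub_X_pow {R : Type*} [Ring R] {w : ℕ} (hw : 0 < w) :
    (mk fun e => if w ∣ e then (1 : R) else 0) * (1 - X ^ w) = 1 := by
  ext e
  rw [mul_sub, mul_one, map_sub, coeff_mul_X_pow', coeff_mk, coeff_one]
  by_cases he : w ≤ e
  · obtain ⟨e, rfl⟩ := Nat.exists_eq_add_of_le he
    simp [Nat.dvd_add_self_left, hw.ne']
  · rcases Nat.eq_zero_or_pos e with rfl | he0
    · simp [he]
    · simp [he, Nat.not_dvd_of_pos_of_lt he0 (Nat.lt_of_not_le he), he0.ne']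

section WeightedSolutions

variable {ι : Type*} [Fintype ι] {w : ι → ℕ} (hw : ∀ j, 0 < w j)
include hw

lemma natCard_sum_mul_eq_coeff_prod {R : Type*} [CommRing R] (d : ℕ) :
    (Nat.card {f : ι → ℕ // ∑ j, f j * w j = d} : R) =
      coeff d (∏ j, mk fun e => if w j ∣ e then (1 : R) else 0) := by
  classical
  rw [coeff_prod]
  simp only [coeff_mk, prod_boole, sum_boole, mem_univ, forall_const]
  congr 1
  rw [← Nat.card_eq_finsetCard]
  refine Nat.card_congr
    { toFun f := ⟨Finsupp.equivFunOnFinite.symm fun j => f.1 j * w j, by simp [f.2]⟩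
      invFun l := ⟨fun j => l.1 j / w j, ?_⟩
      left_inv f := by ext j; simp [Nat.mul_div_cancel _ (hw j)]
      right_inv l := ?_ }
  · have hl := mem_filter.1 l.2
    simp_rw [Nat.div_mul_cancel (hl.2 _)]
    exact (mem_finsuppAntidiag.1 hl.1).1
  · ext j
    simp [Nat.div_mul_cancel ((mem_filter.1 l.2).2 j)]

lemma natCard_add_sum_mul_eq_coeff {R : Type*} [CommRing R] (e a : ℕ) :
    (Nat.card {f : ι → ℕ // e + ∑ j, f j * w j = a} : R) =
      coeff a (X ^ e * ∏ j, mk fun d => if w j ∣ d then (1 : R) else 0) := by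
  rw [coeff_X_pow_mul']
  split_ifs with hea
  · rw [← natCard_sum_mul_eq_coeff_prod hw, Nat.card_congr (Equiv.subtypeEquivRight
      (q := fun f : ι → ℕ => ∑ j, f j * w j = a - e) fun f => by omega)]
  · have : IsEmpty {f : ι → ℕ // e + ∑ j, f j * w j = a} := ⟨fun f => hea (by omega)⟩
    simp

lemma finite_add_sum_mul_eq (e a : ℕ) : Finite {f : ι → ℕ // e + ∑ j, f j * w j = a} := by
  refine Finite.of_injective (fun f j => (⟨f.1 j, ?_⟩ : Fin (a + 1))) fun f g h => ?_
  · have := single_le_sum (fun j _ => Nat.zero_le (f.1 j * w j)) (mem_univ j)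
    have := Nat.le_mul_of_pos_right (f.1 j) (hw j)
    have := f.2
    omega
  · ext j
    simpa using congrFun h j

end WeightedSolutions

lemma pow_succ_sub_one_pos {q : ℕ} (hq : 2 ≤ q) (j : ℕ) : 0 < q ^ (j + 1) - 1 :=
  Nat.sub_pos_of_lt (Nat.one_lt_pow j.succ_ne_zero hq)

lemma powersetCard_range_eq_map (m n : ℕ) :
    powersetCard m (range n)
      = (powersetCard m (univ : Finset (Fin n))).map
          (mapEmbedding Fin.valEmbedding).toEmbedding := by
  rw [← powersetCard_map, Fin.map_valEmbedding_univ, Nat.Iio_eq_range]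

def nonnegSubtypeEquiv {ι : Type*} (P : (ι → ℤ) → Prop) :
    {c : ι → ℤ // (∀ j, 0 ≤ c j) ∧ P c} ≃ {f : ι → ℕ // P fun j => f j} where
  toFun c := ⟨fun j => (c.1 j).toNat, by simpa only [Int.toNat_of_nonneg (c.2.1 _)] using c.2.2⟩
  invFun f := ⟨fun j => f.1 j, fun j => Int.natCast_nonneg _, f.2⟩
  left_inv c := by ext j; exact Int.toNat_of_nonneg (c.2.1 j)
  right_inv f := by ext j; exact Int.toNat_natCast _

/-- Abel summation with the weights `w_i = q^{i+1} - 1`, which satisfy `w_{i+1} - q w_i = q - 1`. -/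
lemma sum_pow_succ_sub_one_mul_sub {R : Type*} [CommRing R] {M : ℕ} (q : R)
    (μ : Fin (M + 1) → R) :
    ∑ i : Fin M, (q ^ ((i : ℕ) + 1) - 1) * (μ i.castSucc - q * μ i.succ)
        + (q ^ (M + 1) - 1) * μ (Fin.last M) = (q - 1) * ∑ j, μ j := by
  have hcast := Fin.sum_univ_castSucc fun j : Fin (M + 1) => (q ^ ((j : ℕ) + 1) - 1) * μ j
  have hsucc := Fin.sum_univ_succ fun j : Fin (M + 1) => (q ^ ((j : ℕ) + 1) - 1) * μ j
  have hsplit : ∑ i : Fin M, (q ^ ((i : ℕ) + 1) - 1) * (μ i.castSucc - q * μ i.succ)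
      = ∑ i : Fin M, (q ^ ((i.castSucc : ℕ) + 1) - 1) * μ i.castSucc
        - ∑ i : Fin M, (q ^ ((i.succ : ℕ) + 1) - 1) * μ i.succ
        + (q - 1) * ∑ i : Fin M, μ i.succ := by
    rw [mul_sum, ← sum_sub_distrib, ← sum_add_distrib]
    refine sum_congr rfl fun i _ => ?_
    simp only [Fin.val_castSucc, Fin.val_succ]
    ring
  rw [hsplit, Fin.sum_univ_succ μ]
  simp only [Fin.val_last, Fin.val_zero] at hcast hsucc
  linear_combination hsucc - hcast

namespace DominantWeights

section Slack

variable {M : ℕ} (q k : ℤ) (S : Finset (Fin (M + 1)))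

/-- In the coordinates `μ = λ + ρ`, the condition of `stmt2Count` at `i + 1` reads
`q μ_{i+1} - [i + 1 ∈ S] ≤ μ_i + k - 1`; its slack sits in slot `i`, and `μ_last - 1` in the
last slot. -/
def slack (μ : Fin (M + 1) → ℤ) : Fin (M + 1) → ℤ :=
  Fin.lastCases (μ (Fin.last M) - 1) fun i =>
    μ i.castSucc - q * μ i.succ + (k - 1) + if i.succ ∈ S then 1 else 0

def unslack (c : Fin (M + 1) → ℤ) : Fin (M + 1) → ℤ :=
  Fin.reverseInduction (c (Fin.last M) + 1) fun i ν =>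
    c i.castSucc + q * ν - (k - 1) - if i.succ ∈ S then 1 else 0

def slackEquiv : (Fin (M + 1) → ℤ) ≃ (Fin (M + 1) → ℤ) where
  toFun := slack q k S
  invFun := unslack q k S
  left_inv μ := by
    funext j
    induction j using Fin.reverseInduction with
    | last => simp [slack, unslack]
    | cast i ih =>
      simp only [unslack, Fin.reverseInduction_castSucc] at ih ⊢
      rw [ih]
      simp only [slack, Fin.lastCases_castSucc]
      ring
  right_inv c := by
    funext j
    cases j using Fin.lastCases with
    | last => simp [slack, unslack]
    | cast i =>
      simp only [slack, unslack, Fin.lastCases_castSucc, Fin.reverseInduction_castSucc]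
      ring

variable {q k S}

lemma lt_of_slack_nonneg {μ : Fin (M + 1) → ℤ} {i : Fin M}
    (h : 0 ≤ slack q k S μ i.castSucc) (hi : k + 1 ≤ (q - 1) * μ i.succ) :
    μ i.succ < μ i.castSucc := by
  simp only [slack, Fin.lastCases_castSucc] at h
  split_ifs at h <;> linarith

lemma add_one_le_of_slack_nonneg (hk : 1 ≤ k) (hkq : k + 2 ≤ q) {μ : Fin (M + 1) → ℤ}
    (h : ∀ j, 0 ≤ slack q k S μ j) (j : Fin (M + 1)) : k + 1 ≤ (q - 1) * μ j := by
  induction j using Fin.reverseInduction with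
  | last =>
    have := h (Fin.last M)
    simp only [slack, Fin.lastCases_last] at this
    nlinarith
  | cast i ih =>
    have := lt_of_slack_nonneg (h i.castSucc) ih
    nlinarith

lemma sum_ite_mem_succ_mul :
    ∑ i : Fin M, (if i.succ ∈ S then 1 else 0) * (q ^ ((i : ℕ) + 1) - 1)
      = ∑ i ∈ S, q ^ (i : ℕ) - #S := by
  calc _ = ∑ j : Fin (M + 1), (if j ∈ S then 1 else 0) * (q ^ (j : ℕ) - 1) := by
        rw [Fin.sum_univ_succ]
        simp
    _ = _ := by simp [ite_mul, sum_ite_mem, sum_sub_distrib]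

lemma sum_slack_mul (μ : Fin (M + 1) → ℤ) :
    ∑ j, slack q k S μ j * (q ^ ((j : ℕ) + 1) - 1)
      = (q - 1) * ∑ j, μ j - (M + 1) * k - #S
        - ((q - k) * ∑ i ∈ range (M + 1), q ^ i - (M + 1) - ∑ i ∈ S, q ^ (i : ℕ)) := by
  have hexpand : ∑ i : Fin M, (μ i.castSucc - q * μ i.succ + (k - 1)
        + (if i.succ ∈ S then 1 else 0)) * (q ^ ((i : ℕ) + 1) - 1)
      = ∑ i : Fin M, (q ^ ((i : ℕ) + 1) - 1) * (μ i.castSucc - q * μ i.succ)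
        + (k - 1) * ∑ i : Fin M, (q ^ ((i : ℕ) + 1) - 1)
        + ∑ i : Fin M, (if i.succ ∈ S then 1 else 0) * (q ^ ((i : ℕ) + 1) - 1) := by
    rw [mul_sum, ← sum_add_distrib, ← sum_add_distrib]
    exact sum_congr rfl fun i _ => by ring
  have hweights : ∑ i : Fin M, (q ^ ((i : ℕ) + 1) - 1) = ∑ i ∈ range (M + 1), q ^ i - (M + 1) := by
    rw [Fin.sum_univ_eq_sum_range (fun i => q ^ (i + 1) - 1), sum_range_succ']
    simp [sum_sub_distrib, pow_succ]
  rw [Fin.sum_univ_castSucc]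
  simp only [slack, Fin.lastCases_castSucc, Fin.lastCases_last, Fin.val_castSucc, Fin.val_last]
  rw [hexpand, hweights, sum_ite_mem_succ_mul]
  linear_combination sum_pow_succ_sub_one_mul_sub q μ + geom_sum_mul q (M + 1)

end Slack

section Admissible

variable {M : ℕ}

def rho (M : ℕ) : Fin (M + 1) → ℤ := fun i => (M : ℤ) - (i : ℕ)

def IsAdmissible (q k : ℤ) (S : Finset (Fin (M + 1))) (l : Fin (M + 1) → ℤ) : Prop :=
  Antitone l ∧
    (∀ i : Fin (M + 1), (if i ∈ S then (1 : ℤ) else 0) ≤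
      (q - 1) * (((M + 1 : ℕ) : ℤ) - 1 - (i : ℕ)) + (q - 1) * l i - k) ∧
    (∀ i : Fin (M + 1), 0 < (i : ℕ) →
      (q - 1) * (((M + 1 : ℕ) : ℤ) - 1 - (i : ℕ)) + q * l i - (if i ∈ S then (1 : ℤ) else 0)
        ≤ l ⟨(i : ℕ) - 1, by omega⟩ + k)

lemma mk_succ_sub_one (i : Fin M) (h : (i.succ : ℕ) - 1 < M + 1) :
    (⟨(i.succ : ℕ) - 1, h⟩ : Fin (M + 1)) = i.castSucc :=
  Fin.ext (by simp)

variable {q k : ℤ} {S : Finset (Fin (M + 1))} {l : Fin (M + 1) → ℤ}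

lemma slack_nonneg_of_isAdmissible (h : IsAdmissible q k S l) (hk : 1 ≤ k) (hkq : k + 2 ≤ q)
    (j : Fin (M + 1)) : 0 ≤ slack q k S (l + rho M) j := by
  obtain ⟨-, hlow, hstep⟩ := h
  cases j using Fin.lastCases with
  | last =>
    have := hlow (Fin.last M)
    simp only [slack, Fin.lastCases_last, Pi.add_apply, rho, Fin.val_last] at this ⊢
    push_cast at this
    split_ifs at this <;> nlinarith
  | cast i =>
    have := hstep i.succ (Nat.succ_pos _)
    rw [mk_succ_sub_one] at this
    simp only [slack, Fin.lastCases_castSucc, Pi.add_apply, rho, Fin.val_succ,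
      Fin.val_castSucc] at this ⊢
    push_cast at this ⊢
    linarith

lemma isAdmissible_of_slack_nonneg (h : ∀ j, 0 ≤ slack q k S (l + rho M) j) (hk : 1 ≤ k)
    (hkq : k + 2 ≤ q) : IsAdmissible q k S l := by
  have hbound := add_one_le_of_slack_nonneg hk hkq h
  refine ⟨Fin.antitone_iff_succ_le.2 fun i => ?_, fun i => ?_, fun i hi => ?_⟩
  · have := lt_of_slack_nonneg (h i.castSucc) (hbound i.succ)
    simp only [Pi.add_apply, rho, Fin.val_succ, Fin.val_castSucc] at this
    push_cast at this
    linarith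
  · have := hbound i
    simp only [Pi.add_apply, rho] at this
    push_cast
    split_ifs <;> linarith
  · obtain ⟨i, rfl⟩ := Fin.exists_succ_eq.2 (Fin.pos_iff_ne_zero.1 hi)
    have := h i.castSucc
    rw [mk_succ_sub_one]
    simp only [slack, Fin.lastCases_castSucc, Pi.add_apply, rho, Fin.val_succ,
      Fin.val_castSucc] at this ⊢
    push_cast at this ⊢
    linarith

lemma degree_eq_iff (a : ℤ) :
    (q - 1) * ∑ i : Fin (M + 1), (((M + 1 : ℕ) : ℤ) - 1 - (i : ℕ)) + (q - 1) * ∑ i, l i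
        - ((M + 1 : ℕ) : ℤ) * k - #S = a ↔
      (q - k) * ∑ i ∈ range (M + 1), q ^ i - (M + 1) - ∑ i ∈ S, q ^ (i : ℕ)
        + ∑ j, slack q k S (l + rho M) j * (q ^ ((j : ℕ) + 1) - 1) = a := by
  simp only [sum_slack_mul, Pi.add_apply, sum_add_distrib, rho]
  push_cast
  simp only [add_sub_cancel_right]
  constructor <;> intro h <;> linear_combination h

end Admissible

def baseDegree (n q k : ℕ) (T : Finset ℕ) : ℕ :=
  (q - k) * ∑ i ∈ range n, q ^ i - n - ∑ i ∈ T, q ^ i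

lemma natCast_baseDegree {n q k : ℕ} (hkq : k + 2 ≤ q) (S : Finset (Fin n)) :
    (baseDegree n q k (S.map Fin.valEmbedding) : ℤ)
      = ((q : ℤ) - k) * ∑ i ∈ range n, (q : ℤ) ^ i - n - ∑ i ∈ S, (q : ℤ) ^ (i : ℕ) := by
  have hS : ∑ i ∈ S.map Fin.valEmbedding, q ^ i ≤ ∑ i ∈ range n, q ^ i :=
    sum_le_sum_of_subset fun i => by simp only [mem_map, mem_range]; rintro ⟨j, -, rfl⟩; exact j.2
  have hn : n ≤ ∑ i ∈ range n, q ^ i := by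
    simpa using card_nsmul_le_sum (range n) (q ^ ·) 1 fun i _ => Nat.one_le_pow _ _ (by omega)
  have hq : 2 * ∑ i ∈ range n, q ^ i ≤ (q - k) * ∑ i ∈ range n, q ^ i :=
    Nat.mul_le_mul_right _ (by omega)
  rw [baseDegree, Nat.cast_sub (by omega), Nat.cast_sub (by omega), sum_map]
  push_cast [Nat.cast_sub (by omega : k ≤ q)]
  rfl

def admissibleEquiv {M q k : ℕ} (hk : 1 ≤ k) (hkq : k + 2 ≤ q) (S : Finset (Fin (M + 1)))
    (a : ℕ) :
    {l : Fin (M + 1) → ℤ // IsAdmissible q k S l ∧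
      ((q : ℤ) - 1) * ∑ i : Fin (M + 1), (((M + 1 : ℕ) : ℤ) - 1 - (i : ℕ))
        + ((q : ℤ) - 1) * ∑ i, l i - ((M + 1 : ℕ) : ℤ) * k - #S = a}
    ≃ {f : Fin (M + 1) → ℕ //
      baseDegree (M + 1) q k (S.map Fin.valEmbedding) + ∑ j, f j * (q ^ ((j : ℕ) + 1) - 1) = a} :=
  let P (c : Fin (M + 1) → ℤ) : Prop :=
    ((q : ℤ) - k) * ∑ i ∈ range (M + 1), (q : ℤ) ^ i - (M + 1) - ∑ i ∈ S, (q : ℤ) ^ (i : ℕ)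
      + ∑ j, c j * ((q : ℤ) ^ ((j : ℕ) + 1) - 1) = a
  (((Equiv.addRight (rho M)).trans (slackEquiv q k S)).subtypeEquiv
      (q := fun c => (∀ j, 0 ≤ c j) ∧ P c) fun l => by
      rw [Equiv.trans_apply, Equiv.coe_addRight]
      exact and_congr
        ⟨fun h => slack_nonneg_of_isAdmissible h (by omega) (by omega),
          fun h => isAdmissible_of_slack_nonneg h (by omega) (by omega)⟩
        (degree_eq_iff a)).trans
    ((nonnegSubtypeEquiv P).trans (Equiv.subtypeEquivRight fun f => by
      have hcast (j : Fin (M + 1)) :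
          ((q ^ ((j : ℕ) + 1) - 1 : ℕ) : ℤ) = (q : ℤ) ^ ((j : ℕ) + 1) - 1 := by
        rw [Nat.cast_sub (Nat.one_le_pow _ _ (by omega))]
        push_cast
        rfl
      rw [← Nat.cast_inj (R := ℤ)]
      simp only [P, Nat.cast_add, Nat.cast_sum, Nat.cast_mul, hcast, natCast_baseDegree hkq]
      push_cast
      rfl))

lemma stmt2Count_eq_sum {M q k : ℕ} (hk : 1 ≤ k) (hkq : k + 2 ≤ q) (m a : ℕ) :
    stmt2Count (M + 1) q k m a = ∑ S ∈ powersetCard m (univ : Finset (Fin (M + 1))),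
      Nat.card {f : Fin (M + 1) → ℕ // baseDegree (M + 1) q k (S.map Fin.valEmbedding)
        + ∑ j, f j * (q ^ ((j : ℕ) + 1) - 1) = a} := by
  have hw (j : Fin (M + 1)) : 0 < q ^ ((j : ℕ) + 1) - 1 := pow_succ_sub_one_pos (by omega) j
  have hfinite (S : {S : Finset (Fin (M + 1)) // #S = m}) :=
    finite_add_sum_mul_eq hw (baseDegree (M + 1) q k (S.1.map Fin.valEmbedding)) a
  rw [sum_subtype _ (fun S => mem_powersetCard_univ), ← Nat.card_sigma, stmt2Count]
  refine Nat.card_congr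
    (Equiv.trans ?_ (Equiv.sigmaCongrRight fun S => admissibleEquiv hk hkq S.1 a))
  exact
    { toFun x := ⟨⟨x.1.2, x.2.2.1⟩, x.1.1, ⟨x.2.1, x.2.2.2.2⟩, by
        linear_combination x.2.2.2.1 - congrArg (Nat.cast : ℕ → ℤ) x.2.2.1⟩
      invFun y := ⟨(y.2.1, y.1.1), y.2.2.1.1, y.1.2, by
        linear_combination y.2.2.2 + congrArg (Nat.cast : ℕ → ℤ) y.1.2, y.2.2.1.2⟩
      left_inv x := rfl
      right_inv y := rfl }

lemma mk_stmt2Count_eq_sum {M q k : ℕ} (hk : 1 ≤ k) (hkq : k + 2 ≤ q) (m : ℕ) :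
    (mk fun a => (stmt2Count (M + 1) q k m a : ℤ)) =
      ∑ S ∈ powersetCard m (univ : Finset (Fin (M + 1))),
        X ^ baseDegree (M + 1) q k (S.map Fin.valEmbedding) *
          ∏ j : Fin (M + 1), mk fun d => if q ^ ((j : ℕ) + 1) - 1 ∣ d then (1 : ℤ) else 0 := by
  have hw (j : Fin (M + 1)) : 0 < q ^ ((j : ℕ) + 1) - 1 := pow_succ_sub_one_pos (by omega) j
  ext a
  rw [coeff_mk, stmt2Count_eq_sum hk hkq, Nat.cast_sum, map_sum]
  exact sum_congr rfl fun S _ => natCard_add_sum_mul_eq_coeff hw _ _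

end DominantWeights

/-- Stated after multiplying by `∏_{i=1}^n (1 - t^{q^i-1})` and expanding
`t^{(q-k)(q^n-1)/(q-1) - n} e_m(t^{-1}, …, t^{-q^{n-1}})` as a sum over `m`-subsets; since
`k ≤ q - 2`, none of the natural-number subtractions in the exponents truncates. -/
theorem stmt2_general (n q k m : ℕ) (hn : 1 ≤ n) (hq : 2 ≤ q) (hk1 : 1 ≤ k) (hk2 : k ≤ q - 2) :
    (PowerSeries.mk fun a : ℕ => (stmt2Count n q k m a : ℤ))
        * ∏ i ∈ range n, (1 - (PowerSeries.X : PowerSeries ℤ) ^ (q ^ (i + 1) - 1))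
      = ∑ S ∈ powersetCard m (range n),
          (PowerSeries.X : PowerSeries ℤ) ^
            ((q - k) * (∑ i ∈ range n, q ^ i) - n - ∑ i ∈ S, q ^ i) := by
  obtain ⟨M, rfl⟩ : ∃ M, n = M + 1 := ⟨n - 1, by omega⟩
  rw [DominantWeights.mk_stmt2Count_eq_sum hk1 (by omega), sum_mul,
    ← Fin.prod_univ_eq_prod_range (fun i => 1 - X ^ (q ^ (i + 1) - 1)),
    powersetCard_range_eq_map, sum_map]
  refine sum_congr rfl fun S _ => ?_
  rw [mul_assoc, ← prod_mul_distrib,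
    prod_eq_one fun (j : Fin (M + 1)) _ => mk_dvd_mul_one_sub_X_pow (pow_succ_sub_one_pos hq j),
    mul_one]
  rfl

/-- For `n ≥ 1`, `q ≥ 2`, `1 ≤ k ≤ q-2`, `0 ≤ m ≤ n`, the number of pairs
`(λ, (i_1 < ⋯ < i_m))` as above equals the coefficient of `t^a` in
`t^{-n+(q-k)(q^n-1)/(q-1)} e_m(t^{-1}, t^{-q}, …, t^{-q^{n-1}}) / ∏_{i=1}^n (1 - t^{q^i-1})`.
This is formalized as the equivalent multiplied-through power series identity in `ℤ[[t]]`
(valid since all exponents `(q-k)(∑_{i<n} q^i) - n - ∑_{i∈S} q^i` are nonnegative and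
`∏_{i=1}^n (1-t^{q^i-1})` is invertible):
`(∑_a N(a) t^a) ∏_{i=1}^n (1-t^{q^i-1})
   = ∑_{S ⊆ {0,…,n-1}, |S| = m} t^{(q-k)(∑_{i<n} q^i) - n - ∑_{i∈S} q^i}`. -/
theorem stmt2 (n q k m : ℕ) (hn : 1 ≤ n) (hq : 2 ≤ q) (hk1 : 1 ≤ k) (hk2 : k ≤ q - 2)
    (hm : m ≤ n) :
    (PowerSeries.mk fun a : ℕ => (stmt2Count n q k m a : ℤ))
        * ∏ i ∈ range n, (1 - (PowerSeries.X : PowerSeries ℤ) ^ (q ^ (i + 1) - 1))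
      = ∑ S ∈ powersetCard m (range n),
          (PowerSeries.X : PowerSeries ℤ) ^
            ((q - k) * (∑ i ∈ range n, q ^ i) - n - ∑ i ∈ S, q ^ i) :=
  stmt2_general n q k m hn hq hk1 hk2
end

section
/- Fix n ≥ 1, q ≥ 2, 1 ≤ k ≤ q-2, 0 ≤ m ≤ n, and a subset {i_1 < ... < i_m} ⊆ {1,...,n}. With ρ_i = n-i, the map λ ↦ (λ̄_1,...,λ̄_n) defined by λ̄_n = λ_n - 1 and λ̄_{i-1} = λ_{i-1} + k - ((q-1)ρ_i + qλ_i) + [i ∈ {i_1,...,i_m}] for 2 ≤ i ≤ n, is a bijection from the set of dominant λ ∈ ℤ^n satisfying the conditions (q-1)ρ_i + (q-1)λ_i - k - [i ∈ {i_1,...,i_m}] ≥ 0 for all i and (q-1)ρ_i + qλ_i - [i ∈ {i_1,...,i_m}] ≤ λ_{i-1} + k for 2 ≤ i ≤ n, onto ℤ_+^n; moreover under this bijection (q-1)Σ_i ρ_i + (q-1)Σ_i λ_i - nk - m = -n + (q-k)(q^n-1)/(q-1) - Σ_{j=1}^m q^{i_j - 1} + Σ_{i=1}^n (q^i - 1)λ̄_i.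 -/
/-!
Writing `a_i = ρ_i + λ_i`, the map reads `λ̄_i = a_i - q a_{i+1} + (k - 1) + [i+1 ∈ S]` for `i < n`
and `λ̄_n = a_n - 1`. Since `λ̄_i - λ_i` only depends on `λ_{i+1}`, the map is unitriangular,
hence a bijection of `ℤ^n`. For `i < n`, `λ̄_i ≥ 0` is exactly the second family of inequalities
(at `i + 1`); the first family and dominance then propagate downward from `λ_n ≥ 1`, which is where
`1 ≤ k ≤ q - 2` enters. The sum identity is Abel summation: the weights `q^i - 1` satisfy
`(q^{i+1} - 1) - q (q^i - 1) = q - 1`, so `∑ (q^i - 1)(a_i - q a_{i+1}) + (q^n - 1) a_n = (q - 1) ∑ a_i`.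
-/

open Finset

/-- The map `λ ↦ λ̄` of Statement 3 (indices `0`-based: the paper's `λ_i`, `1 ≤ i ≤ n`,
is `λ (i-1)` here, and `ρ_i = n - i` becomes `ρ i = n - 1 - i`):
`λ̄_n = λ_n - 1` and, for `2 ≤ i ≤ n`,
`λ̄_{i-1} = λ_{i-1} + k - ((q-1)ρ_i + qλ_i) + [i ∈ S]`. -/
noncomputable def stmt3Map (n q k : ℕ) (S : Finset (Fin n)) (l : Fin n → ℤ) : Fin n → ℤ :=
  fun i =>
    if h : (i : ℕ) = n - 1 then l i - 1
    else
      l i + k - (((q : ℤ) - 1) * ((n : ℤ) - 1 - ((i : ℕ) + 1))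
          + q * l ⟨(i : ℕ) + 1, by omega⟩)
        + (if (⟨(i : ℕ) + 1, by omega⟩ : Fin n) ∈ S then 1 else 0)

theorem bijective_of_unitriangular {ι G : Type*} [LT ι] [WellFoundedGT ι] [AddCommGroup G]
    (F : (ι → G) → ι → G)
    (hF : ∀ l l' i, (∀ j, i < j → l j = l' j) → F l i - l i = F l' i - l' i) :
    F.Bijective := by
  classical
  refine ⟨fun l l' heq => funext fun i => ?_, fun lb => ?_⟩
  · induction i using WellFoundedGT.induction with
    | _ i ih => simpa [heq] using hF l l' i ih
  · let extend (i : ι) (rec : ∀ j, i < j → G) : ι → G := fun j => if h : i < j then rec j h else 0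
    let l : ι → G := wellFounded_gt.fix fun i rec => lb i - (F (extend i rec) i - extend i rec i)
    refine ⟨l, funext fun i => ?_⟩
    have hl : l i = lb i - (F (extend i fun j _ => l j) i - extend i (fun j _ => l j) i) :=
      wellFounded_gt.fix_eq _ i
    rw [← hF l _ i fun j hj => by simp [extend, hj]] at hl
    exact (add_sub_cancel _ _).symm.trans (eq_sub_iff_add_eq.1 hl)

theorem sum_pow_succ_sub_one_mul_sub_mul_succ {R : Type*} [CommRing R] (q : R) (N : ℕ)
    (a : Fin (N + 1) → R) :
    ∑ i : Fin N, (q ^ ((i : ℕ) + 1) - 1) * (a i.castSucc - q * a i.succ)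
        + (q ^ (N + 1) - 1) * a (Fin.last N) = (q - 1) * ∑ i, a i := by
  induction N with
  | zero => simp
  | succ N ih =>
    have := ih fun i => a i.castSucc
    rw [Fin.sum_univ_castSucc, Fin.sum_univ_castSucc a]
    simp only [Fin.succ_castSucc, Fin.val_castSucc, Fin.val_last, Fin.succ_last] at this ⊢
    linear_combination this

theorem sum_pow_succ_sub_one_mul_ite_succ_mem {R : Type*} [CommRing R] (q : R) {N : ℕ}
    (S : Finset (Fin (N + 1))) :
    ∑ i : Fin N, (q ^ ((i : ℕ) + 1) - 1) * (if i.succ ∈ S then 1 else 0)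
      = ∑ i ∈ S, q ^ (i : ℕ) - S.card := calc
  _ = ∑ i : Fin (N + 1), (q ^ (i : ℕ) - 1) * (if i ∈ S then 1 else 0) := by
    rw [Fin.sum_univ_succ]
    simp only [Fin.val_zero, pow_zero, sub_self, zero_mul, zero_add, Fin.val_succ]
  _ = ∑ i ∈ S, (q ^ (i : ℕ) - 1) := by
    simp only [mul_boole, sum_ite_mem, univ_inter]
  _ = ∑ i ∈ S, q ^ (i : ℕ) - S.card := by
    simp [sum_sub_distrib]

def stmt3Slack (n q k : ℕ) (S : Finset (Fin n)) (l : Fin n → ℤ) (i : Fin n) : ℤ :=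
  ((q : ℤ) - 1) * ((n : ℤ) - 1 - (i : ℕ)) + ((q : ℤ) - 1) * l i - k - (if i ∈ S then 1 else 0)

def stmt3Domain (n q k : ℕ) (S : Finset (Fin n)) : Set (Fin n → ℤ) :=
  {l | Antitone l ∧ (∀ i, 0 ≤ stmt3Slack n q k S l i) ∧
    ∀ i : Fin n, 0 < (i : ℕ) →
      ((q : ℤ) - 1) * ((n : ℤ) - 1 - (i : ℕ)) + q * l i - (if i ∈ S then (1 : ℤ) else 0)
        ≤ l ⟨(i : ℕ) - 1, by omega⟩ + k}

lemma stmt3Map_sub_self_eq (n q k : ℕ) (S : Finset (Fin n)) (l l' : Fin n → ℤ) (i : Fin n)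
    (h : ∀ j, i < j → l j = l' j) :
    stmt3Map n q k S l i - l i = stmt3Map n q k S l' i - l' i := by
  by_cases hlast : (i : ℕ) = n - 1
  · simp only [stmt3Map, dif_pos hlast]
    ring
  · simp only [stmt3Map, dif_neg hlast]
    rw [h ⟨i + 1, by omega⟩ (Fin.lt_def.2 (Nat.lt_succ_self _))]
    ring

theorem stmt3Map_bijective (n q k : ℕ) (S : Finset (Fin n)) : (stmt3Map n q k S).Bijective :=
  bijective_of_unitriangular _ (stmt3Map_sub_self_eq n q k S)

lemma stmt3Map_last (N q k : ℕ) (S : Finset (Fin (N + 1))) (l : Fin (N + 1) → ℤ) :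
    stmt3Map (N + 1) q k S l (Fin.last N) = l (Fin.last N) - 1 :=
  dif_pos rfl

lemma stmt3Map_castSucc (N q k : ℕ) (S : Finset (Fin (N + 1))) (l : Fin (N + 1) → ℤ) (i : Fin N) :
    stmt3Map (N + 1) q k S l i.castSucc
      = l i.castSucc + k - (((q : ℤ) - 1) * ((N : ℤ) - 1 - i) + q * l i.succ)
        + (if i.succ ∈ S then 1 else 0) := by
  obtain ⟨i, hi⟩ := i
  rw [stmt3Map, dif_neg (by simp; omega)]
  simp only [Fin.castSucc_mk, Fin.succ_mk]
  push_cast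
  ring

section Succ

variable {N q k : ℕ} {S : Finset (Fin (N + 1))} {l : Fin (N + 1) → ℤ}

lemma zero_le_stmt3Map_castSucc_iff (i : Fin N) :
    0 ≤ stmt3Map (N + 1) q k S l i.castSucc ↔
      ((q : ℤ) - 1) * (((N + 1 : ℕ) : ℤ) - 1 - (i.succ : ℕ)) + q * l i.succ
          - (if i.succ ∈ S then (1 : ℤ) else 0) ≤ l i.castSucc + k := by
  rw [stmt3Map_castSucc, Fin.val_succ]
  push_cast
  constructor <;> intro h <;> linarith

lemma le_castSucc_of_zero_le_stmt3Map {i : Fin N} (hf : 0 ≤ stmt3Map (N + 1) q k S l i.castSucc)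
    (hslack : 0 ≤ stmt3Slack (N + 1) q k S l i.succ) : l i.succ ≤ l i.castSucc := by
  rw [stmt3Map_castSucc] at hf
  rw [stmt3Slack, Fin.val_succ] at hslack
  push_cast at hslack
  linarith

lemma stmt3Slack_castSucc_nonneg (hq : 2 ≤ q) {i : Fin N} (hle : l i.succ ≤ l i.castSucc)
    (hslack : 0 ≤ stmt3Slack (N + 1) q k S l i.succ) :
    0 ≤ stmt3Slack (N + 1) q k S l i.castSucc := by
  have hq' : (0 : ℤ) ≤ (q : ℤ) - 1 := by omega
  have := mul_le_mul_of_nonneg_left hle hq'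
  rw [stmt3Slack, Fin.val_succ] at hslack
  rw [stmt3Slack, Fin.val_castSucc]
  push_cast at hslack ⊢
  split_ifs at hslack ⊢ <;> linarith

lemma stmt3Slack_last_nonneg (hk : k + 2 ≤ q) (hf : 0 ≤ stmt3Map (N + 1) q k S l (Fin.last N)) :
    0 ≤ stmt3Slack (N + 1) q k S l (Fin.last N) := by
  rw [stmt3Map_last] at hf
  have := mul_le_mul_of_nonneg_left hf (by omega : (0 : ℤ) ≤ (q : ℤ) - 1)
  rw [stmt3Slack, Fin.val_last]
  push_cast
  split_ifs <;> linarith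

lemma stmt3Map_last_nonneg (hq : 1 ≤ q) (hk : 1 ≤ k)
    (hslack : 0 ≤ stmt3Slack (N + 1) q k S l (Fin.last N)) :
    0 ≤ stmt3Map (N + 1) q k S l (Fin.last N) := by
  rw [stmt3Slack, Fin.val_last] at hslack
  rw [stmt3Map_last]
  push_cast at hslack
  by_contra! h
  have := mul_le_mul_of_nonneg_left (by omega : l (Fin.last N) ≤ 0) (by omega : (0 : ℤ) ≤ (q : ℤ) - 1)
  split_ifs at hslack <;> linarith

end Succ

theorem stmt3Domain_eq_preimage (n q k : ℕ) (S : Finset (Fin n)) (hk1 : 1 ≤ k) (hk2 : k + 2 ≤ q) :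
    stmt3Domain n q k S = stmt3Map n q k S ⁻¹' {lb | ∀ i, 0 ≤ lb i} := by
  cases n with
  | zero => ext l; simp [stmt3Domain, Subsingleton.antitone]
  | succ N =>
    ext l
    constructor
    · rintro ⟨-, hslack, hC⟩ i
      induction i using Fin.lastCases with
      | last => exact stmt3Map_last_nonneg (by omega) hk1 (hslack _)
      | cast i => exact zero_le_stmt3Map_castSucc_iff i |>.2 (hC i.succ i.succ_pos)
    · intro hf
      have hslack : ∀ i, 0 ≤ stmt3Slack (N + 1) q k S l i := by
        intro i
        induction i using Fin.reverseInduction with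
        | last => exact stmt3Slack_last_nonneg hk2 (hf _)
        | cast i ih =>
          exact stmt3Slack_castSucc_nonneg (by omega) (le_castSucc_of_zero_le_stmt3Map (hf _) ih) ih
      refine ⟨Fin.antitone_iff_succ_le.2 fun i => le_castSucc_of_zero_le_stmt3Map (hf _) (hslack _),
        hslack, fun i hi => ?_⟩
      obtain ⟨j, rfl⟩ := Fin.exists_succ_eq.2 (Fin.pos_iff_ne_zero.1 hi)
      exact zero_le_stmt3Map_castSucc_iff j |>.1 (hf j.castSucc)

theorem stmt3Map_bijOn (n q k : ℕ) (S : Finset (Fin n)) (hk1 : 1 ≤ k) (hk2 : k + 2 ≤ q) :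
    Set.BijOn (stmt3Map n q k S) (stmt3Domain n q k S) {lb | ∀ i, 0 ≤ lb i} := by
  rw [stmt3Domain_eq_preimage n q k S hk1 hk2]
  exact (stmt3Map_bijective n q k S).bijOn_preimage

theorem sum_pow_succ_sub_one_mul_stmt3Map (n q k : ℕ) (S : Finset (Fin n)) (l : Fin n → ℤ) :
    ∑ i : Fin n, ((q : ℤ) ^ ((i : ℕ) + 1) - 1) * stmt3Map n q k S l i
      = ((q : ℤ) - 1) * ∑ i : Fin n, (((n : ℤ) - 1 - (i : ℕ)) + l i)
        + ((k : ℤ) - q) * ∑ i ∈ range n, (q : ℤ) ^ i - ((k : ℤ) - 1) * n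
        + ∑ i ∈ S, (q : ℤ) ^ (i : ℕ) - S.card := by
  cases n with
  | zero => simp [eq_empty_of_isEmpty S]
  | succ N =>
    set a : Fin (N + 1) → ℤ := fun i => ((N + 1 : ℕ) : ℤ) - 1 - (i : ℕ) + l i with ha
    have hcast (i : Fin N) : stmt3Map (N + 1) q k S l i.castSucc
        = (a i.castSucc - q * a i.succ) + ((k : ℤ) - 1) + (if i.succ ∈ S then 1 else 0) := by
      simp only [stmt3Map_castSucc, ha, Fin.val_succ, Fin.val_castSucc]
      push_cast
      ring
    have hlast : stmt3Map (N + 1) q k S l (Fin.last N) = a (Fin.last N) - 1 := by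
      simp only [stmt3Map_last, ha, Fin.val_last]
      push_cast
      ring
    have hweights : ∑ i : Fin N, ((q : ℤ) ^ ((i : ℕ) + 1) - 1)
        = ∑ i ∈ range (N + 1), (q : ℤ) ^ i - 1 - N := by
      rw [Fin.sum_univ_eq_sum_range (fun i => (q : ℤ) ^ (i + 1) - 1), sum_sub_distrib,
        sum_range_succ' (fun i => (q : ℤ) ^ i)]
      simp
    rw [Fin.sum_univ_castSucc]
    simp only [hcast, hlast, mul_add, sum_add_distrib, ← sum_mul,
      Fin.val_castSucc, Fin.val_last]
    push_cast
    linear_combination sum_pow_succ_sub_one_mul_sub_mul_succ (q : ℤ) N a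
      + sum_pow_succ_sub_one_mul_ite_succ_mem (q : ℤ) S + ((k : ℤ) - 1) * hweights
      + geom_sum_mul (q : ℤ) (N + 1)

/-- Fix `n ≥ 1`, `q ≥ 2`, `1 ≤ k ≤ q-2`, `0 ≤ m ≤ n`, and a subset
`S = {i_1 < ⋯ < i_m} ⊆ {1,…,n}` of cardinality `m`.  The map `λ ↦ λ̄` above is a bijection
from the set of dominant `λ ∈ ℤ^n` satisfying
`(q-1)ρ_i + (q-1)λ_i - k - [i ∈ S] ≥ 0` for all `i`, and
`(q-1)ρ_i + qλ_i - [i ∈ S] ≤ λ_{i-1} + k` for `2 ≤ i ≤ n`,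
onto `ℤ₊ⁿ`; moreover under this bijection
`(q-1)∑ρ_i + (q-1)∑λ_i - nk - m
   = -n + (q-k)(q^n-1)/(q-1) - ∑_{j=1}^m q^{i_j-1} + ∑_{i=1}^n (q^i - 1)λ̄_i`
(with `(q^n-1)/(q-1) = ∑_{i<n} q^i` and `∑_{j=1}^m q^{i_j-1} = ∑_{i∈S} q^i` in `0`-based
indexing). -/
theorem stmt3 (n q k m : ℕ) (hk1 : 1 ≤ k) (hk2 : k ≤ q - 2)
    (S : Finset (Fin n)) (hS : S.card = m) :
    Set.BijOn (stmt3Map n q k S)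
      {l : Fin n → ℤ | Antitone l ∧
        (∀ i : Fin n,
          0 ≤ ((q : ℤ) - 1) * ((n : ℤ) - 1 - (i : ℕ)) + ((q : ℤ) - 1) * l i - k
                - (if i ∈ S then 1 else 0)) ∧
        (∀ i : Fin n, 0 < (i : ℕ) →
          ((q : ℤ) - 1) * ((n : ℤ) - 1 - (i : ℕ)) + q * l i - (if i ∈ S then (1 : ℤ) else 0)
            ≤ l ⟨(i : ℕ) - 1, by omega⟩ + k)}
      {lb : Fin n → ℤ | ∀ i, 0 ≤ lb i}
    ∧ ∀ l : Fin n → ℤ,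
        l ∈ {l : Fin n → ℤ | Antitone l ∧
          (∀ i : Fin n,
            0 ≤ ((q : ℤ) - 1) * ((n : ℤ) - 1 - (i : ℕ)) + ((q : ℤ) - 1) * l i - k
                  - (if i ∈ S then 1 else 0)) ∧
          (∀ i : Fin n, 0 < (i : ℕ) →
            ((q : ℤ) - 1) * ((n : ℤ) - 1 - (i : ℕ)) + q * l i - (if i ∈ S then (1 : ℤ) else 0)
              ≤ l ⟨(i : ℕ) - 1, by omega⟩ + k)} →
        ((q : ℤ) - 1) * (∑ i : Fin n, ((n : ℤ) - 1 - (i : ℕ)))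
            + ((q : ℤ) - 1) * (∑ i : Fin n, l i) - n * k - m
          = -(n : ℤ) + ((q : ℤ) - k) * (∑ i ∈ range n, (q : ℤ) ^ i)
              - (∑ i ∈ S, (q : ℤ) ^ (i : ℕ))
              + ∑ i : Fin n, ((q : ℤ) ^ ((i : ℕ) + 1) - 1) * stmt3Map n q k S l i := by
  exact ⟨stmt3Map_bijOn n q k S hk1 (by omega), fun l _ => by
    rw [sum_pow_succ_sub_one_mul_stmt3Map, sum_add_distrib, hS]
    ring⟩
end
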